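/- arXiv:2402.03965 — 3 statements merged into one kernel-verified Lean document; each statement's English description precedes it below -/
import Mathlib

section
/- For any nonzero g ∈ L[x] with deg(g) < n, the apparent distance of g satisfies d*(g) ≤ n − deg(m_g), where m_g = gcd(g, x^n−1). -/
/-!
Every rotation `X ^ h * g mod (X ^ n - 1)` is nonzero, because `X` is a unit modulo `X ^ n - 1`
and `g` has degree below `n`; and it is still divisible by `gcd (g, X ^ n - 1)`. So its degree is
at least that of the gcd.
-/

open Polynomial

noncomputable def dftP {L : Type*} [Field L] (n : ℕ) (α : L) (f : L[X]) : L[X] :=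
  ∑ j ∈ Finset.range n, C (f.eval (α ^ j)) * X ^ j

noncomputable def idftP {L : Type*} [Field L] (n : ℕ) (α : L) (g : L[X]) : L[X] :=
  C ((n : L)⁻¹) * ∑ i ∈ Finset.range n, C (g.eval (α⁻¹ ^ i)) * X ^ i

open Classical in
noncomputable def appDist {L : Type*} [Field L] (n : ℕ) (g : L[X]) : ℕ :=
  if g = 0 then 0
  else (Finset.range n).sup fun h => n - ((X ^ h * g) %ₘ (X ^ n - 1)).natDegree

structure CyclicCode (L : Type*) [Field L] (q n : ℕ) where
  carrier : Set (Polynomial L)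
  zero_mem : 0 ∈ carrier
  deg_lt : ∀ f ∈ carrier, Polynomial.natDegree f < n
  coeff_mem : ∀ f ∈ carrier, ∀ i, (Polynomial.coeff f i) ^ q = Polynomial.coeff f i
  add_mem : ∀ f ∈ carrier, ∀ g ∈ carrier, f + g ∈ carrier
  smul_mem : ∀ a : L, a ^ q = a → ∀ f ∈ carrier, Polynomial.C a * f ∈ carrier
  shift_mem : ∀ f ∈ carrier, (Polynomial.X * f) %ₘ (Polynomial.X ^ n - 1) ∈ carrier

noncomputable def minDist {L : Type*} [Field L] {q n : ℕ} (C : CyclicCode L q n) : ℕ :=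
  sInf { w | ∃ c ∈ C.carrier, c ≠ 0 ∧ w = c.support.card }

open Classical in
noncomputable def appDistAt {L : Type*} [Field L] {q n : ℕ} (α : L) (C : CyclicCode L q n) : ℕ :=
  sInf { d | ∃ c ∈ C.carrier, c ≠ 0 ∧ d = appDist n (dftP n α c) }

open Classical in
noncomputable def appDistCode {L : Type*} [Field L] {q n : ℕ} (C : CyclicCode L q n) : ℕ :=
  sSup { d | ∃ α : L, IsPrimitiveRoot α n ∧ d = appDistAt α C }

def IsOptimalRoot {L : Type*} [Field L] {q n : ℕ} (α : L) (C : CyclicCode L q n) : Prop :=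
  IsPrimitiveRoot α n ∧ appDistAt α C = appDistCode C

def IsGenBy {L : Type*} [Field L] {q n : ℕ} (v : Polynomial L) (C : CyclicCode L q n) : Prop :=
  v ∈ C.carrier ∧ ∀ C' : CyclicCode L q n, v ∈ C'.carrier → C.carrier ⊆ C'.carrier

def IsIdemGen {L : Type*} [Field L] {q n : ℕ} (e : Polynomial L) (C : CyclicCode L q n) : Prop :=
  e ∈ C.carrier ∧ (e * e) %ₘ (X ^ n - 1) = e ∧ ∀ c ∈ C.carrier, (e * c) %ₘ (X ^ n - 1) = c

def IsGenPoly {L : Type*} [Field L] {q n : ℕ} (g : Polynomial L) (C : CyclicCode L q n) : Prop :=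
  g ∈ C.carrier ∧ g.Monic ∧ g ∣ (X ^ n - 1) ∧ (∀ c ∈ C.carrier, g ∣ c) ∧
    ∀ f : L[X], f.natDegree < n → (∀ i, f.coeff i ^ q = f.coeff i) → g ∣ f → f ∈ C.carrier

noncomputable def polyGcd {L : Type*} [Field L] (a b : L[X]) : L[X] :=
  letI := Classical.decEq L[X]
  EuclideanDomain.gcd a b

namespace Polynomial

variable {R : Type*} [CommRing R]

theorem isCoprime_X_pow_sub_one_X {n : ℕ} (hn : n ≠ 0) : IsCoprime (X ^ n - 1 : R[X]) X :=
  ⟨-1, X ^ (n - 1), by rw [← pow_succ, Nat.sub_add_cancel (Nat.pos_of_ne_zero hn)]; ring⟩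

theorem dvd_modByMonic_of_dvd {d p q : R[X]} (hp : d ∣ p) (hq : d ∣ q) : d ∣ p %ₘ q :=
  (dvd_sub_left hp).mp (hq.trans (dvd_modByMonic_sub p q))

variable [NoZeroDivisors R] {p q g : R[X]}

theorem pow_mul_modByMonic_ne_zero (hq : q.Monic) (hpq : IsCoprime q p) (hg : g ≠ 0)
    (hgq : g.natDegree < q.natDegree) (h : ℕ) : (p ^ h * g) %ₘ q ≠ 0 := by
  rw [Ne, modByMonic_eq_zero_iff_dvd hq]
  intro hdvd
  have := natDegree_le_of_dvd ((hpq.pow_right (n := h)).dvd_of_dvd_mul_left hdvd) hg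
  omega

theorem natDegree_le_natDegree_pow_mul_modByMonic {d : R[X]} (hq : q.Monic)
    (hpq : IsCoprime q p) (hg : g ≠ 0) (hgq : g.natDegree < q.natDegree) (hdg : d ∣ g)
    (hdq : d ∣ q) (h : ℕ) : d.natDegree ≤ ((p ^ h * g) %ₘ q).natDegree :=
  natDegree_le_of_dvd (dvd_modByMonic_of_dvd (hdg.mul_left _) hdq)
    (pow_mul_modByMonic_ne_zero hq hpq hg hgq h)

end Polynomial

theorem polyGcd_dvd_left {L : Type*} [Field L] (a b : L[X]) : polyGcd a b ∣ a :=
  @EuclideanDomain.gcd_dvd_left _ _ (Classical.decEq _) a b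

theorem polyGcd_dvd_right {L : Type*} [Field L] (a b : L[X]) : polyGcd a b ∣ b :=
  @EuclideanDomain.gcd_dvd_right _ _ (Classical.decEq _) a b

theorem stmt2_general {L : Type*} [Field L] (n : ℕ) (g : L[X])
    (hgn : g.natDegree < n) :
    appDist n g ≤ n - (polyGcd g (X ^ n - 1)).natDegree := by
  have hn : n ≠ 0 := by omega
  have hmonic : (X ^ n - 1 : L[X]).Monic := by
    rw [← C_1]; exact monic_X_pow_sub_C 1 hn
  have hdeg : (X ^ n - 1 : L[X]).natDegree = n := by
    rw [← C_1]; exact natDegree_X_pow_sub_C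
  rw [appDist]
  split_ifs with hg0
  · exact Nat.zero_le _
  refine Finset.sup_le fun h _ => Nat.sub_le_sub_left ?_ n
  exact natDegree_le_natDegree_pow_mul_modByMonic hmonic (isCoprime_X_pow_sub_one_X hn) hg0
    (by rwa [hdeg]) (polyGcd_dvd_left _ _) (polyGcd_dvd_right _ _) h

/-- d*(g) ≤ n − deg (gcd (g, x^n − 1)). -/
theorem stmt2 {L : Type*} [Field L] (n : ℕ) (hn : 0 < n) (g : L[X]) (hg0 : g ≠ 0)
    (hgn : g.natDegree < n) :
    appDist n g ≤ n - (polyGcd g (X ^ n - 1)).natDegree :=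
  stmt2_general n g hgn
end

section
/- For any codeword c of a cyclic code C ⊆ F_q[x]/(x^n−1) and any primitive n-th root of unity α, the Hamming weight of c equals n − deg(gcd(φ_{α,c}, x^n−1)). -/
/-!
Evaluating the discrete Fourier transform `φ` of `c` at `α⁻¹ ^ i` gives `n * cᵢ`, by orthogonality
of the characters `j ↦ (α ^ m * α⁻¹ ^ i) ^ j`; and `n ≠ 0` in `L` because `L` contains a primitive
`n`-th root of unity. As `X ^ n - 1` is separable and splits over `L`, the degree of its gcd with
`φ` is the number of `n`-th roots of unity at which `φ` vanishes, i.e. the number of indices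
`i < n` with `cᵢ = 0`; the weight of `c` is the complementary count.
-/

open Polynomial

open Finset

theorem card_support_eq_sub_card_filter_coeff_eq_zero {R : Type*} [Semiring R] [DecidableEq R]
    {p : R[X]} {n : ℕ} (hp : p.natDegree < n) : #p.support = n - #{i ∈ range n | p.coeff i = 0} := by
  have hsupp : p.support = {i ∈ range n | ¬p.coeff i = 0} := by
    ext i
    simpa using fun h => (le_natDegree_of_ne_zero h).trans_lt hp
  have hsplit := card_filter_add_card_filter_not (s := range n) (fun i => p.coeff i = 0)
  rw [card_range] at hsplit
  rw [hsupp]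
  omega

theorem natDegree_polyGcd_eq_card_filter_roots {K : Type*} [Field K] [DecidableEq K]
    {f g : K[X]} (hg : g.Separable) (hgs : Splits g) :
    (polyGcd f g).natDegree = #{x ∈ g.roots.toFinset | f.IsRoot x} := by
  have hgcd : polyGcd f g = EuclideanDomain.gcd f g := by
    unfold polyGcd
    congr!
  have hdvd : polyGcd f g ∣ g := hgcd ▸ EuclideanDomain.gcd_dvd_right f g
  have hd0 : polyGcd f g ≠ 0 := ne_zero_of_dvd_ne_zero hg.ne_zero hdvd
  rw [(hgs.of_dvd hg.ne_zero hdvd).natDegree_eq_card_roots,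
    ← Multiset.toFinset_card_of_nodup (nodup_roots (hg.of_dvd hdvd))]
  congr 1
  ext x
  rw [mem_filter, Multiset.mem_toFinset, Multiset.mem_toFinset, mem_roots hd0, mem_roots hg.ne_zero,
    hgcd, isRoot_gcd_iff_isRoot_left_right, and_comm]

namespace IsPrimitiveRoot

variable {K : Type*} [Field K] {ζ : K} {n : ℕ}

theorem card_filter_roots_X_pow_sub_one [DecidableEq K] (hζ : IsPrimitiveRoot ζ n)
    (P : K → Prop) [DecidablePred P] :
    #{x ∈ (X ^ n - 1 : K[X]).roots.toFinset | P x} = #{k ∈ range n | P (ζ ^ k)} := by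
  have hroots : (X ^ n - 1 : K[X]).roots.toFinset = (range n).image (ζ ^ ·) := by
    ext x
    simp only [Multiset.mem_toFinset, mem_roots', IsRoot.def, eval_sub, eval_pow, eval_X,
      eval_one, sub_eq_zero, mem_image, mem_range]
    constructor
    · rintro ⟨hne, hx⟩
      have : NeZero n := ⟨fun h => hne (by simp [h])⟩
      exact hζ.eq_pow_of_pow_eq_one hx
    · rintro ⟨k, hk, rfl⟩
      refine ⟨by simpa using X_pow_sub_C_ne_zero (by omega : 0 < n) (1 : K), ?_⟩
      rw [← pow_mul, mul_comm, pow_mul, hζ.pow_eq_one, one_pow]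
  rw [hroots, filter_image, card_image_of_injOn]
  intro i hi j hj hij
  exact hζ.pow_inj (mem_range.mp (mem_filter.mp hi).1) (mem_range.mp (mem_filter.mp hj).1) hij

theorem geom_sum_pow_mul_inv_pow (hζ : IsPrimitiveRoot ζ n) {m i : ℕ} (hm : m < n) (hi : i < n) :
    ∑ j ∈ range n, (ζ ^ m * ζ⁻¹ ^ i) ^ j = if m = i then (n : K) else 0 := by
  have hζ0 : ζ ≠ 0 := hζ.ne_zero (by omega)
  split_ifs with hmi
  · simp [hmi, hζ0]
  · have hne : ζ ^ m * ζ⁻¹ ^ i ≠ 1 := by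
      rw [inv_pow, ← div_eq_mul_inv, Ne, div_eq_one_iff_eq (pow_ne_zero _ hζ0)]
      exact fun h => hmi (hζ.pow_inj hm hi h)
    rw [geom_sum_eq hne, mul_pow, ← pow_mul, ← pow_mul, mul_comm m, mul_comm i, pow_mul,
      pow_mul, hζ.pow_eq_one, hζ.inv.pow_eq_one]
    simp

theorem eval_dftP_inv_pow (hζ : IsPrimitiveRoot ζ n) {c : K[X]} (hc : c.natDegree < n) {i : ℕ}
    (hi : i < n) : (dftP n ζ c).eval (ζ⁻¹ ^ i) = n * c.coeff i := by
  calc (dftP n ζ c).eval (ζ⁻¹ ^ i)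
      = ∑ j ∈ range n, ∑ m ∈ range n, c.coeff m * (ζ ^ m * ζ⁻¹ ^ i) ^ j := by
        simp only [dftP, eval_finsetSum, eval_mul, eval_C, eval_pow, eval_X,
          eval_eq_sum_range' hc, sum_mul]
        refine sum_congr rfl fun j _ => sum_congr rfl fun m _ => ?_
        ring
    _ = ∑ m ∈ range n, c.coeff m * ∑ j ∈ range n, (ζ ^ m * ζ⁻¹ ^ i) ^ j := by
        rw [sum_comm]
        simp only [mul_sum]
    _ = n * c.coeff i := by
        rw [sum_congr rfl fun m hm => by
          rw [hζ.geom_sum_pow_mul_inv_pow (mem_range.mp hm) hi]]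
        simp [hi, mul_comm]

end IsPrimitiveRoot

theorem stmt10_general {L : Type*} [Field L] (q n : ℕ)
    (Cc : CyclicCode L q n) (c : L[X]) (hc : c ∈ Cc.carrier)
    (α : L) (hα : IsPrimitiveRoot α n) :
    c.support.card = n - (polyGcd (dftP n α c) (X ^ n - 1)).natDegree := by
  classical
  have hdeg : c.natDegree < n := Cc.deg_lt c hc
  have : NeZero n := ⟨by omega⟩
  have hn0 : (n : L) ≠ 0 := hα.neZero'.out
  have hsep : (X ^ n - 1 : L[X]).Separable := by
    simpa using separable_X_pow_sub_C (1 : L) hn0 one_ne_zero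
  have hsplits : Splits (X ^ n - 1 : L[X]) := by simpa using X_pow_sub_one_splits hα
  rw [natDegree_polyGcd_eq_card_filter_roots hsep hsplits, hα.inv.card_filter_roots_X_pow_sub_one,
    card_support_eq_sub_card_filter_coeff_eq_zero hdeg]
  have hzeros : ∀ i ∈ range n, (dftP n α c).IsRoot (α⁻¹ ^ i) ↔ c.coeff i = 0 := fun i hi => by
    rw [IsRoot.def, hα.eval_dftP_inv_pow hdeg (mem_range.mp hi), mul_eq_zero, or_iff_right hn0]
  rw [filter_congr hzeros]

/-- for a codeword c of a cyclic code, ω(c) = n − deg gcd(φ_{α,c}, x^n−1). -/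
theorem stmt10 {L : Type*} [Field L] (p q s n : ℕ) (hp : p.Prime) [CharP L p]
    (hq : q = p ^ s) (hs : 0 < s) (hn : 0 < n) (hcop : Nat.Coprime n q)
    (Cc : CyclicCode L q n) (c : L[X]) (hc : c ∈ Cc.carrier)
    (α : L) (hα : IsPrimitiveRoot α n) :
    c.support.card = n - (polyGcd (dftP n α c) (X ^ n - 1)).natDegree :=
  stmt10_general q n Cc c hc α hα
end

section
/- For any nonzero f ∈ F_q[x]/(x^n−1) and any primitive n-th root of unity α, the apparent distance of the Fourier transform of f is at most the Hamming weight of f: d*(φ_{α,f}) ≤ ω(f). -/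
/-! Multiplying `φ_{α,f}` by `x^h` modulo `x^n - 1` rotates its coefficients, and the rotated
polynomial is the transform of `f(α^{n-h} x)`, which has the same support as `f`. So it suffices
that `deg φ_{α,g} ≥ n - ω(g)` for every nonzero `g` of degree `< n`. Otherwise `g` vanishes at the
`ω(g)` consecutive powers `α^{n-ω(g)}, …, α^{n-1}`; since the `α^e`, `e ∈ supp g`, are distinct,
the Vandermonde determinant of these equations is nonzero and forces `g = 0`. -/

open Polynomial

namespace Polynomial

section ModXPowSubOne

variable {R : Type*} [CommRing R] {n : ℕ}

lemma monic_X_pow_sub_one (hn : n ≠ 0) : (X ^ n - 1 : R[X]).Monic := by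
  simpa using monic_X_pow_sub_C (1 : R) hn

lemma sum_C_mul_modByMonic {ι : Type*} (q : R[X]) (s : Finset ι) (c : ι → R) (p : ι → R[X]) :
    (∑ i ∈ s, C (c i) * p i) %ₘ q = ∑ i ∈ s, C (c i) * (p i %ₘ q) := by
  simp only [← smul_eq_C_mul, ← modByMonicHom_apply, map_sum, map_smul]

lemma X_pow_modByMonic_X_pow_sub_one [Nontrivial R] (hn : n ≠ 0) (a : ℕ) :
    (X ^ a : R[X]) %ₘ (X ^ n - 1) = X ^ (a % n) := by
  have hdvd : (X ^ n - 1 : R[X]) ∣ X ^ a - X ^ (a % n) := by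
    have : (X ^ a - X ^ (a % n) : R[X]) = X ^ (a % n) * ((X ^ n) ^ (a / n) - 1) := by
      rw [mul_sub, mul_one, ← pow_mul, ← pow_add, Nat.mod_add_div]
    exact this ▸ dvd_mul_of_dvd_right (sub_one_dvd_pow_sub_one _ _) _
  rw [modByMonic_eq_of_dvd_sub (monic_X_pow_sub_one hn) hdvd,
    (modByMonic_eq_self_iff (monic_X_pow_sub_one hn)).2]
  rw [degree_X_pow, ← C_1, degree_X_pow_sub_C (Nat.pos_of_ne_zero hn)]
  exact_mod_cast Nat.mod_lt _ (Nat.pos_of_ne_zero hn)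

end ModXPowSubOne

lemma support_comp_C_mul_X {R : Type*} [CommSemiring R] [NoZeroDivisors R] {β : R} (hβ : β ≠ 0)
    (f : R[X]) : (f.comp (C β * X)).support = f.support := by
  ext e
  simp [pow_ne_zero _ hβ]

theorem eq_zero_of_eval_pow_eq_zero {R : Type*} [CommRing R] [IsDomain R] {f : R[X]} {γ : R}
    (hγ : Set.InjOn (γ ^ ·) f.support) (h : ∀ i < f.support.card, f.eval (γ ^ i) = 0) :
    f = 0 := by
  set e := f.support.equivFin.symm
  have hcoeff : (fun k => f.coeff (e k)) = 0 := by
    refine Matrix.eq_zero_of_forall_pow_sum_mul_pow_eq_zero (f := fun k => γ ^ (e k : ℕ))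
      (fun a b hab => e.injective (Subtype.ext (hγ (e a).2 (e b).2 hab))) fun i => ?_
    rw [Fintype.sum_equiv e _ (fun x : f.support => f.coeff x * (γ ^ (x : ℕ)) ^ (i : ℕ))
      fun _ => rfl, Finset.sum_coe_sort f.support (fun x => f.coeff x * (γ ^ x) ^ (i : ℕ)),
      ← h i i.2, eval_eq_sum, sum_def]
    simp only [← pow_mul, mul_comm]
  by_contra hf
  obtain ⟨j, hj⟩ := nonempty_support_iff.2 hf
  simpa [e, mem_support_iff.1 hj] using congrFun hcoeff (f.support.equivFin ⟨j, hj⟩)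

end Polynomial

lemma Nat.add_mod_add_mod_eq_self {n a b j : ℕ} (hab : a + b = n) (hj : j < n) :
    ((j + a) % n + b) % n = j := by
  rw [Nat.mod_add_mod, add_assoc, hab, Nat.add_mod_right, Nat.mod_eq_of_lt hj]

section DFT

variable {K : Type*} [Field K] {n : ℕ} {α : K}

lemma coeff_dftP (f : K[X]) {j : ℕ} (hj : j < n) : (dftP n α f).coeff j = f.eval (α ^ j) := by
  simp [dftP, coeff_C_mul, coeff_X_pow, hj]

lemma X_pow_mul_dftP_modByMonic (hα : α ^ n = 1) (hn : n ≠ 0) {h : ℕ} (hh : h ≤ n) (f : K[X]) :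
    (X ^ h * dftP n α f) %ₘ (X ^ n - 1) = dftP n α (f.comp (C (α ^ (n - h)) * X)) := by
  have hsub : h + (n - h) = n := Nat.add_sub_cancel' hh
  have hsub' : n - h + h = n := Nat.sub_add_cancel hh
  have hlt : ∀ a, a % n < n := fun a => Nat.mod_lt _ (Nat.pos_of_ne_zero hn)
  simp only [dftP, Finset.mul_sum, mul_left_comm (X ^ h), ← pow_add, sum_C_mul_modByMonic,
    X_pow_modByMonic_X_pow_sub_one hn, eval_comp, eval_mul, eval_C, eval_X]
  refine Finset.sum_nbij' (fun j => (j + h) % n) (fun i => (i + (n - h)) % n)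
    (fun j _ => Finset.mem_range.2 (hlt _)) (fun i _ => Finset.mem_range.2 (hlt _))
    (fun j hj => Nat.add_mod_add_mod_eq_self hsub (Finset.mem_range.1 hj))
    (fun i hi => Nat.add_mod_add_mod_eq_self hsub' (Finset.mem_range.1 hi)) fun j hj => ?_
  rw [add_comm h j, add_comm (n - h),
    ← pow_eq_pow_of_modEq (Nat.mod_modEq ((j + h) % n + (n - h)) n) hα,
    Nat.add_mod_add_mod_eq_self hsub (Finset.mem_range.1 hj)]

theorem le_natDegree_dftP_add_card_support (hα : IsPrimitiveRoot α n) {f : K[X]} (hf : f ≠ 0)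
    (hfn : f.natDegree < n) : n ≤ (dftP n α f).natDegree + f.support.card := by
  by_contra! hlt
  set w := f.support.card
  have hβ : α ^ (n - w) ≠ 0 := pow_ne_zero _ (hα.ne_zero (by omega))
  have hvanish : ∀ i < w, f.eval (α ^ (n - w) * α ^ i) = 0 := fun i hi => by
    rw [← pow_add, ← coeff_dftP f (by omega : n - w + i < n)]
    exact coeff_eq_zero_of_natDegree_lt (by omega)
  have hinj : Set.InjOn (α ^ ·) f.support := fun a ha b hb =>
    hα.pow_inj ((le_natDegree_of_mem_supp a ha).trans_lt hfn)
      ((le_natDegree_of_mem_supp b hb).trans_lt hfn)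
  refine hf ((comp_C_mul_X_eq_zero_iff (mem_nonZeroDivisors_of_ne_zero hβ)).1
    (eq_zero_of_eval_pow_eq_zero (γ := α) ?_ ?_))
  · rwa [support_comp_C_mul_X hβ]
  · rw [support_comp_C_mul_X hβ]
    simpa only [eval_comp, eval_mul, eval_C, eval_X] using hvanish

end DFT

theorem stmt11_general {L : Type*} [Field L] (n : ℕ)
    (f : L[X]) (hfn : f.natDegree < n)
    (α : L) (hα : IsPrimitiveRoot α n) :
    appDist n (dftP n α f) ≤ f.support.card := by
  have hn : n ≠ 0 := by omega
  unfold appDist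
  split_ifs with hφ
  · exact Nat.zero_le _
  have hf : f ≠ 0 := by rintro rfl; simp [dftP] at hφ
  refine Finset.sup_le fun h hh => ?_
  have hβ : α ^ (n - h) ≠ 0 := pow_ne_zero _ (hα.ne_zero hn)
  rw [X_pow_mul_dftP_modByMonic hα.pow_eq_one hn (Finset.mem_range.1 hh).le,
    ← support_comp_C_mul_X hβ f]
  have := le_natDegree_dftP_add_card_support hα
    (mt (comp_C_mul_X_eq_zero_iff (mem_nonZeroDivisors_of_ne_zero hβ)).1 hf)
    (by rwa [natDegree_comp, natDegree_C_mul_X _ hβ, mul_one])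
  omega

/-- d*(φ_{α,f}) ≤ ω(f). -/
theorem stmt11 {L : Type*} [Field L] (p q s n : ℕ) (hp : p.Prime) [CharP L p]
    (hq : q = p ^ s) (hs : 0 < s) (hn : 0 < n) (hcop : Nat.Coprime n q)
    (f : L[X]) (hf0 : f ≠ 0) (hfn : f.natDegree < n)
    (hfq : ∀ i, f.coeff i ^ q = f.coeff i)
    (α : L) (hα : IsPrimitiveRoot α n) :
    appDist n (dftP n α f) ≤ f.support.card :=
  stmt11_general n f hfn α hα
end
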